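/- arXiv:2402.13691 — 6 statements merged into one kernel-verified Lean document; each statement's English description precedes it below -/
import Mathlib

section
/- Let ν > 0 with m - 1 < ν ≤ m for a natural number m, and let f : [0,∞) → ℝ be m-times continuously differentiable with f and its derivatives of exponential order (so that all Laplace transforms converge and e^{-μt} d^k f/dt^k (t) → 0 as t → ∞ for all μ > 0 and 0 ≤ k ≤ m). Then for every μ > 0, the Laplace transform of the Dzherbashyan–Caputo derivative of order ν of f equals μ^ν times the Laplace transform of f minus the sum over k = 0, …, ⌈ν⌉ - 1 of μ^{ν-k-1} times the k-th derivative of f at 0. -/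
/-!
For `ν < m` the Caputo derivative is the Riemann–Liouville integral of order `m - ν` of `f⁽ᵐ⁾`,
the causal convolution of `f⁽ᵐ⁾` with `t ^ (m - ν - 1) / Γ(m - ν)`. Extended by zero to
`(-∞, 0]`, this is a convolution on `ℝ`; as `e^{-μt} = e^{-μs} e^{-μ(t-s)}`, the weight passes
into both factors, and Fubini turns the Laplace transform of the convolution into the product
`μ ^ (ν - m) · laplace f⁽ᵐ⁾ μ`. Integrating by parts `m` times gives
`laplace f⁽ᵐ⁾ μ = μ ^ m · laplace f μ - ∑_{k < m} μ ^ (m - 1 - k) f⁽ᵏ⁾(0)`, and `m = ⌈ν⌉₊`.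
-/

open MeasureTheory Set intervalIntegral

/-- The Dzherbashyan–Caputo fractional derivative of order `ν` with `m - 1 < ν ≤ m`. -/
noncomputable def caputoDeriv (ν : ℝ) (m : ℕ) (f : ℝ → ℝ) (t : ℝ) : ℝ :=
  if ν = m then iteratedDeriv m f t
  else (1 / Real.Gamma (m - ν)) * ∫ s in (0:ℝ)..t, (t - s) ^ ((m : ℝ) - ν - 1) * iteratedDeriv m f s

open Real Filter Topology

noncomputable def laplace (g : ℝ → ℝ) (μ : ℝ) : ℝ :=
  ∫ t in Ioi 0, exp (-μ * t) * g t

theorem laplace_const_mul (c : ℝ) (g : ℝ → ℝ) (μ : ℝ) :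
    laplace (fun t => c * g t) μ = c * laplace g μ := by
  simp only [laplace, mul_left_comm _ c, MeasureTheory.integral_const_mul]

theorem laplace_of_hasDerivAt {g g' : ℝ → ℝ} {μ : ℝ}
    (hg : ∀ t ∈ Ici 0, HasDerivAt g (g' t) t)
    (hlim : Tendsto (fun t => exp (-μ * t) * g t) atTop (𝓝 0))
    (hint : IntegrableOn (fun t => exp (-μ * t) * g t) (Ioi 0))
    (hint' : IntegrableOn (fun t => exp (-μ * t) * g' t) (Ioi 0)) :
    laplace g' μ = μ * laplace g μ - g 0 := by
  have hprod : ∀ t ∈ Ici (0:ℝ), HasDerivAt (fun t => exp (-μ * t) * g t)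
      (exp (-μ * t) * g' t - μ * (exp (-μ * t) * g t)) t := by
    intro t ht
    have he : HasDerivAt (fun t => exp (-μ * t)) (exp (-μ * t) * -μ) t :=
      ((hasDerivAt_id t).const_mul (-μ)).exp.congr_deriv (by simp)
    exact (he.mul (hg t ht)).congr_deriv (by ring)
  have key := integral_Ioi_of_hasDerivAt_of_tendsto' hprod (hint'.sub (hint.const_mul μ)) hlim
  rw [integral_sub hint' (hint.const_mul μ), MeasureTheory.integral_const_mul] at key
  simp only [mul_zero, exp_zero, one_mul, zero_sub] at key
  rw [laplace, laplace]
  linarith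

theorem laplace_iteratedDeriv {f : ℝ → ℝ} {μ : ℝ} (n : ℕ) (hf : ContDiff ℝ n f)
    (hlim : ∀ k < n, Tendsto (fun t => exp (-μ * t) * iteratedDeriv k f t) atTop (𝓝 0))
    (hint : ∀ k ≤ n, IntegrableOn (fun t => exp (-μ * t) * iteratedDeriv k f t) (Ioi 0)) :
    laplace (iteratedDeriv n f) μ =
      μ ^ n * laplace f μ - ∑ k ∈ Finset.range n, μ ^ (n - 1 - k) * iteratedDeriv k f 0 := by
  induction n with
  | zero => simp
  | succ n ih =>
    have hderiv : ∀ t ∈ Ici (0:ℝ),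
        HasDerivAt (iteratedDeriv n f) (iteratedDeriv (n + 1) f t) t := fun t _ => by
      rw [iteratedDeriv_succ]
      exact (hf.differentiable_iteratedDeriv n (by exact_mod_cast n.lt_succ_self) t).hasDerivAt
    rw [laplace_of_hasDerivAt hderiv (hlim n n.lt_succ_self) (hint n n.le_succ) (hint _ le_rfl),
      ih (hf.of_le (by exact_mod_cast n.le_succ)) (fun k hk => hlim k (hk.trans n.lt_succ_self))
        (fun k hk => hint k (hk.trans n.le_succ)),
      Finset.sum_range_succ, mul_sub, Finset.mul_sum, ← mul_assoc, ← pow_succ']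
    have hpow : ∀ k ∈ Finset.range n, μ * (μ ^ (n - 1 - k) * iteratedDeriv k f 0) =
        μ ^ (n + 1 - 1 - k) * iteratedDeriv k f 0 := fun k hk => by
      rw [← mul_assoc, ← pow_succ', show n - 1 - k + 1 = n + 1 - 1 - k by
        have := Finset.mem_range.mp hk; omega]
    rw [Finset.sum_congr rfl hpow, show n + 1 - 1 - n = 0 by omega, pow_zero, one_mul]
    ring

section CausalConvolution

open ContinuousLinearMap
open scoped Convolution

variable {g k : ℝ → ℝ} {t : ℝ}

theorem convolution_indicator_Ioi_of_nonneg (ht : 0 ≤ t) :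
    ((Ioi 0).indicator g ⋆[mul ℝ ℝ] (Ioi 0).indicator k) t =
      ∫ s in (0:ℝ)..t, k (t - s) * g s := by
  have hsupp : ∀ s, (Ioi 0).indicator g s * (Ioi 0).indicator k (t - s) =
      (Ioo 0 t).indicator (fun s => k (t - s) * g s) s := fun s => by
    by_cases hs : 0 < s <;> by_cases hst : s < t <;>
      simp [indicator, hs, hst, sub_pos, mul_comm]
  rw [convolution_def, intervalIntegral.integral_of_le ht, integral_Ioc_eq_integral_Ioo,
    ← MeasureTheory.integral_indicator measurableSet_Ioo]
  simp only [mul_apply', hsupp]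

theorem convolution_indicator_Ioi_of_nonpos (ht : t ≤ 0) :
    ((Ioi 0).indicator g ⋆[mul ℝ ℝ] (Ioi 0).indicator k) t = 0 := by
  have hzero : ∀ s, (Ioi 0).indicator g s * (Ioi 0).indicator k (t - s) = 0 := fun s => by
    by_cases hs : 0 < s
    · simp [indicator, hs, sub_pos, ht.trans hs.le]
    · simp [indicator, hs]
  simp [convolution_def, hzero]

theorem exp_neg_mul_mul_convolution (f g : ℝ → ℝ) (μ t : ℝ) :
    exp (-μ * t) * (f ⋆[mul ℝ ℝ] g) t =
      ((fun s => exp (-μ * s) * f s) ⋆[mul ℝ ℝ] fun s => exp (-μ * s) * g s) t := by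
  simp only [convolution_def, mul_apply', ← MeasureTheory.integral_const_mul]
  congr 1
  funext s
  rw [show exp (-μ * t) = exp (-μ * s) * exp (-μ * (t - s)) by rw [← exp_add]; ring_nf]
  ring

theorem laplace_convolution {μ : ℝ}
    (hg : IntegrableOn (fun t => exp (-μ * t) * g t) (Ioi 0))
    (hk : IntegrableOn (fun t => exp (-μ * t) * k t) (Ioi 0)) :
    laplace (fun t => ∫ s in (0:ℝ)..t, k (t - s) * g s) μ = laplace g μ * laplace k μ := by
  have hweight : ∀ h : ℝ → ℝ, (fun s => exp (-μ * s) * (Ioi 0).indicator h s) =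
      (Ioi 0).indicator (fun s => exp (-μ * s) * h s) := fun h =>
    funext fun s => (indicator_mul_right _ (fun s => exp (-μ * s)) h).symm
  have hG := hweight g ▸ hg.integrable_indicator measurableSet_Ioi
  have hK := hweight k ▸ hk.integrable_indicator measurableSet_Ioi
  calc laplace (fun t => ∫ s in (0:ℝ)..t, k (t - s) * g s) μ
      = ∫ t in Ioi 0, exp (-μ * t) * ((Ioi 0).indicator g ⋆[mul ℝ ℝ] (Ioi 0).indicator k) t :=
        setIntegral_congr_fun measurableSet_Ioi fun t ht => by
          rw [convolution_indicator_Ioi_of_nonneg (le_of_lt ht)]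
    _ = ∫ t, exp (-μ * t) * ((Ioi 0).indicator g ⋆[mul ℝ ℝ] (Ioi 0).indicator k) t :=
        setIntegral_eq_integral_of_forall_compl_eq_zero fun t ht => by
          rw [convolution_indicator_Ioi_of_nonpos (not_lt.mp ht), mul_zero]
    _ = (∫ t, exp (-μ * t) * (Ioi 0).indicator g t) *
          ∫ t, exp (-μ * t) * (Ioi 0).indicator k t := by
        simp only [exp_neg_mul_mul_convolution]
        exact integral_convolution (mul ℝ ℝ) hG hK
    _ = laplace g μ * laplace k μ := by
        rw [hweight, hweight, MeasureTheory.integral_indicator measurableSet_Ioi,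
          MeasureTheory.integral_indicator measurableSet_Ioi, laplace, laplace]

end CausalConvolution

section PowerKernel

variable {α μ : ℝ}

noncomputable def riemannLiouville (α : ℝ) (g : ℝ → ℝ) (t : ℝ) : ℝ :=
  1 / Gamma α * ∫ s in (0:ℝ)..t, (t - s) ^ (α - 1) * g s

theorem integrableOn_exp_neg_mul_mul_rpow (hα : 0 < α) (hμ : 0 < μ) :
    IntegrableOn (fun t => exp (-μ * t) * t ^ (α - 1)) (Ioi 0) := by
  simpa [rpow_one, mul_comm] using
    integrableOn_rpow_mul_exp_neg_mul_rpow (by linarith : -1 < α - 1) zero_lt_one hμ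

theorem laplace_rpow_sub_one (hα : 0 < α) (hμ : 0 < μ) :
    laplace (fun t => t ^ (α - 1)) μ = Gamma α / μ ^ α := by
  calc laplace (fun t => t ^ (α - 1)) μ = ∫ t in Ioi 0, t ^ (α - 1) * exp (-(μ * t)) := by
        simp only [laplace, neg_mul, mul_comm (exp _)]
    _ = (1 / μ) ^ α * Gamma α := integral_rpow_mul_exp_neg_mul_Ioi hα hμ
    _ = Gamma α / μ ^ α := by rw [div_rpow zero_le_one hμ.le, one_rpow]; ring

theorem laplace_riemannLiouville {g : ℝ → ℝ} (hα : 0 < α) (hμ : 0 < μ)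
    (hg : IntegrableOn (fun t => exp (-μ * t) * g t) (Ioi 0)) :
    laplace (riemannLiouville α g) μ = μ ^ (-α) * laplace g μ := by
  have hconv : riemannLiouville α g =
      fun t => 1 / Gamma α * ∫ s in (0:ℝ)..t, (fun u => u ^ (α - 1)) (t - s) * g s := rfl
  rw [hconv, laplace_const_mul, laplace_convolution hg (integrableOn_exp_neg_mul_mul_rpow hα hμ),
    laplace_rpow_sub_one hα hμ, rpow_neg hμ.le]
  field_simp [(Gamma_pos_of_pos hα).ne']

end PowerKernel

theorem caputoDeriv_eq_riemannLiouville {ν : ℝ} {m : ℕ} (f : ℝ → ℝ) (h : ν ≠ m) :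
    caputoDeriv ν m f = riemannLiouville (m - ν) (iteratedDeriv m f) := by
  funext t
  rw [caputoDeriv, if_neg h, riemannLiouville]

theorem laplace_caputoDeriv_eq_rpow_mul {ν μ : ℝ} {m : ℕ} {f : ℝ → ℝ} (hνm : ν ≤ m) (hμ : 0 < μ)
    (hint : IntegrableOn (fun t => exp (-μ * t) * iteratedDeriv m f t) (Ioi 0)) :
    laplace (caputoDeriv ν m f) μ = μ ^ (ν - m) * laplace (iteratedDeriv m f) μ := by
  rcases hνm.eq_or_lt with rfl | hlt
  · have hcaputo : caputoDeriv m m f = iteratedDeriv m f := funext fun t => if_pos rfl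
    rw [hcaputo, sub_self, rpow_zero, one_mul]
  · rw [caputoDeriv_eq_riemannLiouville f hlt.ne,
      laplace_riemannLiouville (sub_pos.mpr hlt) hμ hint, neg_sub]

theorem laplace_caputoDeriv_general
    (ν : ℝ) (m : ℕ) (f : ℝ → ℝ)
    (hνm : (m : ℝ) - 1 < ν) (hνm' : ν ≤ m)
    (hf : ContDiff ℝ m f)
    (hexp : ∀ μ : ℝ, 0 < μ → ∀ k : ℕ, k ≤ m →
      Filter.Tendsto (fun t : ℝ => Real.exp (-μ * t) * iteratedDeriv k f t)
        Filter.atTop (nhds 0))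
    (hint : ∀ μ : ℝ, 0 < μ → ∀ k : ℕ, k ≤ m →
      IntegrableOn (fun t : ℝ => Real.exp (-μ * t) * iteratedDeriv k f t) (Ioi 0)) :
    ∀ μ : ℝ, 0 < μ →
      ∫ t in Ioi (0:ℝ), Real.exp (-μ * t) * caputoDeriv ν m f t =
        μ ^ ν * (∫ t in Ioi (0:ℝ), Real.exp (-μ * t) * f t)
          - ∑ k ∈ Finset.range ⌈ν⌉₊, μ ^ (ν - k - 1) * iteratedDeriv k f 0 := by
  intro μ hμ
  have hceil : ⌈ν⌉₊ = m := by
    rcases Nat.eq_zero_or_pos m with rfl | hm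
    · exact Nat.ceil_eq_zero.mpr (by exact_mod_cast hνm')
    · rw [Nat.ceil_eq_iff hm.ne', Nat.cast_sub hm]
      exact ⟨by exact_mod_cast hνm, hνm'⟩
  have hpow : ∀ j : ℕ, μ ^ (ν - m) * μ ^ j = μ ^ (ν - m + j) := fun j =>
    (rpow_add_natCast hμ.ne' _ _).symm
  change laplace (caputoDeriv ν m f) μ = μ ^ ν * laplace f μ - _
  rw [laplace_caputoDeriv_eq_rpow_mul hνm' hμ (hint μ hμ m le_rfl),
    laplace_iteratedDeriv m hf (fun k hk => hexp μ hμ k hk.le) (hint μ hμ), hceil, mul_sub,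
    ← mul_assoc, hpow, Finset.mul_sum]
  congr 1
  · rw [sub_add_cancel]
  · refine Finset.sum_congr rfl fun k hk => ?_
    have hk : 1 + k ≤ m := by have := Finset.mem_range.mp hk; omega
    rw [← mul_assoc, hpow, Nat.sub_sub, Nat.cast_sub hk]
    push_cast
    ring_nf

theorem laplace_caputoDeriv
    (ν : ℝ) (m : ℕ) (f : ℝ → ℝ)
    (hν₀ : 0 < ν) (hνm : (m : ℝ) - 1 < ν) (hνm' : ν ≤ m)
    (hf : ContDiff ℝ m f)
    (hexp : ∀ μ : ℝ, 0 < μ → ∀ k : ℕ, k ≤ m →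
      Filter.Tendsto (fun t : ℝ => Real.exp (-μ * t) * iteratedDeriv k f t)
        Filter.atTop (nhds 0))
    (hint : ∀ μ : ℝ, 0 < μ → ∀ k : ℕ, k ≤ m →
      IntegrableOn (fun t : ℝ => Real.exp (-μ * t) * iteratedDeriv k f t) (Ioi 0))
    (hintC : ∀ μ : ℝ, 0 < μ →
      IntegrableOn (fun t : ℝ => Real.exp (-μ * t) * caputoDeriv ν m f t) (Ioi 0)) :
    ∀ μ : ℝ, 0 < μ →
      ∫ t in Ioi (0:ℝ), Real.exp (-μ * t) * caputoDeriv ν m f t =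
        μ ^ ν * (∫ t in Ioi (0:ℝ), Real.exp (-μ * t) * f t)
          - ∑ k ∈ Finset.range ⌈ν⌉₊, μ ^ (ν - k - 1) * iteratedDeriv k f 0 :=
  laplace_caputoDeriv_general ν m f hνm hνm' hf hexp hint
end

section
/- Let ν > 1 and let u_ν : [0,∞) × [0,∞) → ℝ be a measurable function satisfying ∫_0^∞ e^{-μx} u_ν(t,x) dx = e^{-μ^ν t} for all μ ≥ 0, t ≥ 0, with ∫_0^∞ x |u_ν(t,x)| dx < ∞. Then ∫_0^∞ u_ν(t,x) dx = 1 and ∫_0^∞ x u_ν(t,x) dx = 0 for all t > 0; consequently, for each t > 0, u_ν(t,·) is not almost everywhere nonnegative (it is a sign-varying kernel). -/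
/-!
Differentiating the Laplace transform at `0` from the right, under the integral sign with
dominating function `x |u t x|`, gives minus the first moment; but `s ↦ exp (-s ^ ν * t)` has
derivative `0` at `0` since `ν > 1`. A nonnegative function with vanishing first moment on
`(0, ∞)` vanishes a.e., which contradicts total mass `1`.
-/

open MeasureTheory Set Filter Topology

lemma abs_exp_neg_sub_one_le {y : ℝ} (hy : 0 ≤ y) : |Real.exp (-y) - 1| ≤ y := by
  have hlow : 1 - y ≤ Real.exp (-y) := by linarith [Real.add_one_le_exp (-y)]
  have hup : Real.exp (-y) ≤ 1 := Real.exp_le_one_iff.mpr (neg_nonpos.mpr hy)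
  rw [abs_le]
  constructor <;> linarith

lemma abs_exp_neg_mul_sub_one_div_le {s x : ℝ} (hs : 0 < s) (hx : 0 ≤ x) :
    |(Real.exp (-s * x) - 1) / s| ≤ x := by
  rw [abs_div, abs_of_pos hs, div_le_iff₀ hs, mul_comm x, neg_mul]
  exact abs_exp_neg_sub_one_le (by positivity)

lemma tendsto_exp_neg_mul_slope (x : ℝ) :
    Tendsto (fun s => (Real.exp (-s * x) - 1) / s) (𝓝[>] 0) (𝓝 (-x)) := by
  have hderiv : HasDerivAt (fun s : ℝ => Real.exp (-s * x)) (-x) 0 := by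
    simpa using ((hasDerivAt_id (0 : ℝ)).neg.mul_const x).exp
  refine ((hasDerivAt_iff_tendsto_slope.mp hderiv).mono_left
    (nhdsWithin_mono _ fun s (hs : 0 < s) => hs.ne')).congr fun s => ?_
  simp [slope_def_field]

theorem hasDerivWithinAt_laplace_zero {ρ : Measure ℝ} {f : ℝ → ℝ} (hf : Integrable f ρ)
    (hxf : Integrable (fun x => x * f x) ρ) (hρ : ∀ᵐ x ∂ρ, 0 ≤ x) :
    HasDerivWithinAt (fun s => ∫ x, Real.exp (-s * x) * f x ∂ρ) (-∫ x, x * f x ∂ρ)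
      (Ioi 0) 0 := by
  have hexp : ∀ s, 0 ≤ s → Integrable (fun x => Real.exp (-s * x) * f x) ρ := fun s hs =>
    hf.bdd_mul (c := 1) (by fun_prop) <| hρ.mono fun x hx => by
      rw [Real.norm_eq_abs, abs_of_pos (Real.exp_pos _)]
      exact Real.exp_le_one_iff.mpr (by nlinarith)
  rw [hasDerivWithinAt_iff_tendsto_slope' self_notMem_Ioi]
  have hslope : ∀ s, 0 < s → slope (fun s => ∫ x, Real.exp (-s * x) * f x ∂ρ) 0 s =
      ∫ x, (Real.exp (-s * x) - 1) / s * f x ∂ρ := fun s hs => by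
    simp only [slope_def_field, neg_zero, zero_mul, Real.exp_zero, one_mul, sub_zero]
    rw [← integral_sub (hexp s hs.le) hf, ← integral_div]
    congr 1 with x
    ring
  have hlim : Tendsto (fun s => ∫ x, (Real.exp (-s * x) - 1) / s * f x ∂ρ) (𝓝[>] 0)
      (𝓝 (∫ x, -(x * f x) ∂ρ)) := by
    refine tendsto_integral_filter_of_dominated_convergence (fun x => ‖x * f x‖) ?_ ?_
      hxf.norm ?_
    · exact Eventually.of_forall fun s => (by fun_prop : Continuous _).aestronglyMeasurable.mul
        hf.aestronglyMeasurable
    · filter_upwards [self_mem_nhdsWithin] with s (hs : 0 < s)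
      filter_upwards [hρ] with x hx
      simp only [norm_mul, Real.norm_eq_abs, abs_of_nonneg hx]
      gcongr
      exact abs_exp_neg_mul_sub_one_div_le hs hx
    · exact Eventually.of_forall fun x => by
        simpa using (tendsto_exp_neg_mul_slope x).mul_const (f x)
  rw [integral_neg] at hlim
  refine hlim.congr' ?_
  filter_upwards [self_mem_nhdsWithin] with s (hs : 0 < s)
  exact (hslope s hs).symm

lemma hasDerivAt_exp_neg_rpow_mul_zero {ν : ℝ} (hν : 1 < ν) (t : ℝ) :
    HasDerivAt (fun s : ℝ => Real.exp (-(s ^ ν) * t)) 0 0 := by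
  have h := ((Real.hasDerivAt_rpow_const (x := 0) (Or.inr hν.le)).neg.mul_const t).exp
  simpa [Real.zero_rpow (by linarith : ν - 1 ≠ 0)] using h

lemma integral_eq_zero_of_integral_mul_eq_zero {ρ : Measure ℝ} {f : ℝ → ℝ}
    (hρ : ∀ᵐ x ∂ρ, 0 < x) (hf : 0 ≤ᵐ[ρ] f) (hxf : Integrable (fun x => x * f x) ρ)
    (hmom : ∫ x, x * f x ∂ρ = 0) : ∫ x, f x ∂ρ = 0 := by
  have hnn : 0 ≤ᵐ[ρ] fun x => x * f x := by
    filter_upwards [hρ, hf] with x hx hfx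
    exact mul_nonneg hx.le hfx
  have hzero : f =ᵐ[ρ] 0 := by
    filter_upwards [(integral_eq_zero_iff_of_nonneg_ae hnn hxf).mp hmom, hρ] with x hx hxpos
    exact (mul_eq_zero.mp hx).resolve_left hxpos.ne'
  simp [integral_congr_ae hzero]

theorem pseudo_subordinator_kernel_sign_varying_general
    (ν : ℝ) (hν : 1 < ν) (u : ℝ → ℝ → ℝ)
    (hker : ∀ μ : ℝ, 0 ≤ μ → ∀ t : ℝ, 0 ≤ t →
      ∫ x in Ioi (0:ℝ), Real.exp (-μ * x) * u t x = Real.exp (-(μ ^ ν) * t))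
    (hint : ∀ t : ℝ, 0 ≤ t → IntegrableOn (fun x => u t x) (Ioi 0))
    (hmom : ∀ t : ℝ, 0 ≤ t → IntegrableOn (fun x => x * |u t x|) (Ioi 0)) :
    ∀ t : ℝ, 0 < t →
      (∫ x in Ioi (0:ℝ), u t x = 1) ∧
      (∫ x in Ioi (0:ℝ), x * u t x = 0) ∧
      ¬ (∀ᵐ x ∂(volume.restrict (Ioi (0:ℝ))), 0 ≤ u t x) := by
  intro t ht
  have hpos : ∀ᵐ x ∂(volume.restrict (Ioi (0:ℝ))), 0 < x := ae_restrict_mem measurableSet_Ioi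
  have hmass : ∫ x in Ioi (0:ℝ), u t x = 1 := by
    simpa [Real.zero_rpow (by linarith : ν ≠ 0)] using hker 0 le_rfl t ht.le
  have hxu : IntegrableOn (fun x => x * u t x) (Ioi 0) :=
    (hmom t ht.le).mono' (aestronglyMeasurable_id.mul (hint t ht.le).aestronglyMeasurable) <|
      hpos.mono fun x hx => by rw [norm_mul, Real.norm_eq_abs, Real.norm_eq_abs, abs_of_pos hx]
  have hfirst : ∫ x in Ioi (0:ℝ), x * u t x = 0 := by
    have hlaplace := hasDerivWithinAt_laplace_zero (hint t ht.le) hxu (hpos.mono fun _ => le_of_lt)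
    have hkernel := ((hasDerivAt_exp_neg_rpow_mul_zero hν t).hasDerivWithinAt (s := Ioi 0)).congr
      (fun s hs => hker s (le_of_lt hs) t ht.le) (hker 0 le_rfl t ht.le)
    exact neg_eq_zero.mp ((uniqueDiffWithinAt_Ioi 0).eq_deriv _ hlaplace hkernel)
  refine ⟨hmass, hfirst, fun hnn => ?_⟩
  exact one_ne_zero (hmass.symm.trans
    (integral_eq_zero_of_integral_mul_eq_zero hpos hnn hxu hfirst))

theorem pseudo_subordinator_kernel_sign_varying
    (ν : ℝ) (hν : 1 < ν) (u : ℝ → ℝ → ℝ)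
    (hmeas : Measurable (Function.uncurry u))
    (hker : ∀ μ : ℝ, 0 ≤ μ → ∀ t : ℝ, 0 ≤ t →
      ∫ x in Ioi (0:ℝ), Real.exp (-μ * x) * u t x = Real.exp (-(μ ^ ν) * t))
    (hint : ∀ t : ℝ, 0 ≤ t → IntegrableOn (fun x => u t x) (Ioi 0))
    (hmom : ∀ t : ℝ, 0 ≤ t → IntegrableOn (fun x => x * |u t x|) (Ioi 0)) :
    ∀ t : ℝ, 0 < t →
      (∫ x in Ioi (0:ℝ), u t x = 1) ∧
      (∫ x in Ioi (0:ℝ), x * u t x = 0) ∧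
      ¬ (∀ᵐ x ∂(volume.restrict (Ioi (0:ℝ))), 0 ≤ u t x) :=
  pseudo_subordinator_kernel_sign_varying_general ν hν u hker hint hmom
end

section
/- Let ν > 0, let u_{ν₁} and u_{ν₂} be kernels with ∫_0^∞ e^{-μx} u_{ν_i}(t,x) dx = e^{-μ^{ν_i} t}. Then the stochastic composition kernel w(t,x) = ∫_0^∞ u_{ν₁}(s,x) u_{ν₂}(t,s) ds satisfies ∫_0^∞ e^{-μx} w(t,x) dx = e^{-μ^{ν₁ν₂} t} for all μ, t ≥ 0. In other words, S_{ν₁}(S_{ν₂}(t)) is equal in distribution to S_{ν₁ν₂}(t). -/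
/-!
Fubini turns the Laplace transform of the composed kernel into
`∫ s, (∫ x, e^{-μx} u₁ s x) u₂ t s = ∫ s, e^{-μ^{ν₁} s} u₂ t s`, which is the Laplace transform of
`u₂ t` at `μ^{ν₁}`, namely `e^{-(μ^{ν₁})^{ν₂} t} = e^{-μ^{ν₁ν₂} t}`.
-/

open MeasureTheory Set

theorem integral_mul_integral_comm {α β : Type*} [MeasurableSpace α] [MeasurableSpace β]
    {μ : Measure α} {ν : Measure β} [SFinite μ] [SFinite ν]
    (g : β → ℝ) (u : α → β → ℝ) (v : α → ℝ)
    (h : Integrable (fun p : α × β => g p.2 * u p.1 p.2 * v p.1) (μ.prod ν)) :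
    ∫ x, g x * ∫ s, u s x * v s ∂μ ∂ν = ∫ s, (∫ x, g x * u s x ∂ν) * v s ∂μ := by
  calc ∫ x, g x * ∫ s, u s x * v s ∂μ ∂ν
      = ∫ x, ∫ s, g x * u s x * v s ∂μ ∂ν := by
        simp only [mul_assoc, integral_const_mul]
    _ = ∫ s, ∫ x, g x * u s x * v s ∂ν ∂μ := (integral_integral_swap h).symm
    _ = ∫ s, (∫ x, g x * u s x ∂ν) * v s ∂μ := by
        simp only [integral_mul_const]

theorem composition_of_stable_pseudo_subordinators_general
    (ν₁ ν₂ : ℝ)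
    (u₁ u₂ : ℝ → ℝ → ℝ)
    (hker₁ : ∀ μ : ℝ, 0 ≤ μ → ∀ t : ℝ, 0 ≤ t →
      ∫ x in Ioi (0:ℝ), Real.exp (-μ * x) * u₁ t x = Real.exp (-(μ ^ ν₁) * t))
    (hker₂ : ∀ μ : ℝ, 0 ≤ μ → ∀ t : ℝ, 0 ≤ t →
      ∫ x in Ioi (0:ℝ), Real.exp (-μ * x) * u₂ t x = Real.exp (-(μ ^ ν₂) * t))
    (hFub : ∀ μ : ℝ, 0 ≤ μ → ∀ t : ℝ, 0 ≤ t →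
      IntegrableOn (fun p : ℝ × ℝ => Real.exp (-μ * p.2) * u₁ p.1 p.2 * u₂ t p.1)
        ((Ioi (0:ℝ)) ×ˢ (Ioi (0:ℝ)))) :
    ∀ μ : ℝ, 0 ≤ μ → ∀ t : ℝ, 0 ≤ t →
      ∫ x in Ioi (0:ℝ), Real.exp (-μ * x) * ∫ s in Ioi (0:ℝ), u₁ s x * u₂ t s =
        Real.exp (-(μ ^ (ν₁ * ν₂)) * t) := by
  intro μ hμ t ht
  have hprod := hFub μ hμ t ht
  rw [IntegrableOn, Measure.volume_eq_prod, ← Measure.prod_restrict] at hprod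
  calc ∫ x in Ioi (0:ℝ), Real.exp (-μ * x) * ∫ s in Ioi (0:ℝ), u₁ s x * u₂ t s
      = ∫ s in Ioi (0:ℝ), (∫ x in Ioi (0:ℝ), Real.exp (-μ * x) * u₁ s x) * u₂ t s :=
        integral_mul_integral_comm _ _ _ hprod
    _ = ∫ s in Ioi (0:ℝ), Real.exp (-(μ ^ ν₁) * s) * u₂ t s :=
        setIntegral_congr_fun measurableSet_Ioi fun s hs => by rw [hker₁ μ hμ s (le_of_lt hs)]
    _ = Real.exp (-(μ ^ (ν₁ * ν₂)) * t) := by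
        rw [hker₂ _ (Real.rpow_nonneg hμ ν₁) t ht, Real.rpow_mul hμ]

theorem composition_of_stable_pseudo_subordinators
    (ν₁ ν₂ : ℝ) (hν₁ : 0 < ν₁) (hν₂ : 0 < ν₂)
    (u₁ u₂ : ℝ → ℝ → ℝ)
    (hmeas₁ : Measurable (Function.uncurry u₁)) (hmeas₂ : Measurable (Function.uncurry u₂))
    (hker₁ : ∀ μ : ℝ, 0 ≤ μ → ∀ t : ℝ, 0 ≤ t →
      ∫ x in Ioi (0:ℝ), Real.exp (-μ * x) * u₁ t x = Real.exp (-(μ ^ ν₁) * t))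
    (hker₂ : ∀ μ : ℝ, 0 ≤ μ → ∀ t : ℝ, 0 ≤ t →
      ∫ x in Ioi (0:ℝ), Real.exp (-μ * x) * u₂ t x = Real.exp (-(μ ^ ν₂) * t))
    (hFub : ∀ μ : ℝ, 0 ≤ μ → ∀ t : ℝ, 0 ≤ t →
      IntegrableOn (fun p : ℝ × ℝ => Real.exp (-μ * p.2) * u₁ p.1 p.2 * u₂ t p.1)
        ((Ioi (0:ℝ)) ×ˢ (Ioi (0:ℝ)))) :
    ∀ μ : ℝ, 0 ≤ μ → ∀ t : ℝ, 0 ≤ t →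
      ∫ x in Ioi (0:ℝ), Real.exp (-μ * x) * ∫ s in Ioi (0:ℝ), u₁ s x * u₂ t s =
        Real.exp (-(μ ^ (ν₁ * ν₂)) * t) :=
  composition_of_stable_pseudo_subordinators_general ν₁ ν₂ u₁ u₂ hker₁ hker₂ hFub
end

section
/- Fix λ > 0, ν > 0, 0 < β < ν, t > 0, μ > 0 and δ > 0. Let f(x) = β δ^β x^{-β-1} 1_{[δ,∞)}(x) be the Pareto density. Then exp{ -λ t δ^{-β} ∫_δ^∞ (1 - e^{-(μx)^ν}) f(x) dx } converges, as δ ↓ 0, to exp{ -λ t μ^β Γ(1 - β/ν) }. Moreover, with δ^{-ν} in place of δ^{-β} in the exponent and the Dirac mass at δ in place of f, exp{ -λ t δ^{-ν} (1 - e^{-(μδ)^ν}) } converges to exp{ -λ t μ^ν } as δ ↓ 0. -/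
/-!
Substituting `s = (μ x) ^ ν` turns `∫₀^∞ (1 - e^{-(μx)^ν}) β x^{-β-1} dx` into
`μ ^ β ∫₀^∞ (1 - e^{-s}) α s^{-α-1} ds` with `α = β / ν ∈ (0, 1)`. Integrating by parts
against `(1 - e^{-s}) s^{-α}`, which vanishes at both ends, turns the latter into the Gamma
integral `∫₀^∞ e^{-s} s^{-α} ds = Γ(1 - α)`. The integrals over `(δ, ∞)` converge to the
integral over `(0, ∞)` as `δ ↓ 0`, and for the Dirac mass the limit is `(1 - e^{-u}) / u → 1`.
-/

open MeasureTheory Set Filter Topology Real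

lemma one_sub_exp_neg_nonneg {x : ℝ} (hx : 0 ≤ x) : 0 ≤ 1 - exp (-x) := by
  simpa using exp_le_one_iff.mpr (neg_nonpos.mpr hx)

lemma one_sub_exp_neg_le_one (x : ℝ) : 1 - exp (-x) ≤ 1 :=
  sub_le_self 1 (exp_nonneg _)

lemma one_sub_exp_neg_le_self (x : ℝ) : 1 - exp (-x) ≤ x := by
  linarith [one_sub_le_exp_neg x]

lemma tendsto_rpow_nhdsGT_zero {p : ℝ} (hp : 0 < p) :
    Tendsto (fun x : ℝ => x ^ p) (𝓝[>] 0) (𝓝[>] 0) := by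
  refine tendsto_nhdsWithin_of_tendsto_nhds_of_eventually_within _ ?_ ?_
  · simpa [zero_rpow hp.ne'] using
      (continuousAt_rpow_const 0 p (Or.inr hp.le)).tendsto.mono_left nhdsWithin_le_nhds
  · filter_upwards [self_mem_nhdsWithin] with x hx using rpow_pos_of_pos hx p

lemma tendsto_inv_mul_one_sub_exp_neg :
    Tendsto (fun u : ℝ => u⁻¹ * (1 - exp (-u))) (𝓝[>] 0) (𝓝 1) := by
  have h : HasDerivAt (fun u : ℝ => 1 - exp (-u)) 1 0 := by
    simpa using ((hasDerivAt_exp (-0)).comp 0 (hasDerivAt_neg (0:ℝ))).const_sub 1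
  simpa using h.tendsto_slope_zero_right

section

variable {α : ℝ}

lemma integrableOn_one_sub_exp_neg_mul_rpow (hα0 : 0 < α) (hα1 : α < 1) :
    IntegrableOn (fun s : ℝ => (1 - exp (-s)) * (α * s ^ (-α - 1))) (Ioi 0) := by
  have hmeas : AEStronglyMeasurable (fun s : ℝ => (1 - exp (-s)) * (α * s ^ (-α - 1))) := by
    fun_prop
  rw [← Ioc_union_Ioi_eq_Ioi zero_le_one]
  refine IntegrableOn.union ?_ ?_
  · have hbound : IntegrableOn (fun s : ℝ => α * s ^ (-α)) (Ioc 0 1) := by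
      have := intervalIntegral.intervalIntegrable_rpow' (a := 0) (b := 1) (by linarith : -1 < -α)
      exact ((intervalIntegrable_iff_integrableOn_Ioc_of_le zero_le_one).mp this).const_mul α
    refine hbound.mono' hmeas.restrict ?_
    filter_upwards [ae_restrict_mem measurableSet_Ioc] with s hs'
    have hs : 0 < s := hs'.1
    rw [norm_of_nonneg (by have := one_sub_exp_neg_nonneg hs.le; positivity)]
    calc (1 - exp (-s)) * (α * s ^ (-α - 1)) ≤ s * (α * s ^ (-α - 1)) := by
          gcongr; exact one_sub_exp_neg_le_self s
      _ = α * s ^ (-α) := by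
          rw [mul_left_comm, ← rpow_one_add' hs.le (by linarith)]; ring_nf
  · have hbound : IntegrableOn (fun s : ℝ => α * s ^ (-α - 1)) (Ioi 1) :=
      (integrableOn_Ioi_rpow_of_lt (by linarith) one_pos).const_mul α
    refine hbound.mono' hmeas.restrict ?_
    filter_upwards [ae_restrict_mem measurableSet_Ioi] with s (hs : 1 < s)
    have hs0 : 0 ≤ s := by linarith
    rw [norm_of_nonneg (by have := one_sub_exp_neg_nonneg hs0; positivity)]
    exact mul_le_of_le_one_left (by positivity) (one_sub_exp_neg_le_one s)

lemma hasDerivAt_one_sub_exp_neg_mul_rpow {s : ℝ} (hs : 0 < s) :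
    HasDerivAt (fun s : ℝ => (1 - exp (-s)) * s ^ (-α))
      (exp (-s) * s ^ (1 - α - 1) - (1 - exp (-s)) * (α * s ^ (-α - 1))) s := by
  have h1 : HasDerivAt (fun s : ℝ => 1 - exp (-s)) (exp (-s)) s := by
    simpa using ((hasDerivAt_exp (-s)).comp s (hasDerivAt_neg s)).const_sub 1
  refine (h1.mul (hasDerivAt_rpow_const (Or.inl hs.ne'))).congr_deriv ?_
  rw [show 1 - α - 1 = -α by ring]
  ring

theorem integral_one_sub_exp_neg_mul_rpow (hα0 : 0 < α) (hα1 : α < 1) :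
    ∫ s in Ioi 0, (1 - exp (-s)) * (α * s ^ (-α - 1)) = Gamma (1 - α) := by
  set F := fun s : ℝ => (1 - exp (-s)) * s ^ (-α)
  have hF0 : F 0 = 0 := by simp [F]
  have hF_right : Tendsto F (𝓝[>] 0) (𝓝 0) := by
    refine squeeze_zero_norm' ?_
      ((tendsto_rpow_nhdsGT_zero (by linarith : 0 < 1 - α)).mono_right nhdsWithin_le_nhds)
    filter_upwards [self_mem_nhdsWithin] with s (hs : 0 < s)
    rw [norm_of_nonneg (by have := one_sub_exp_neg_nonneg hs.le; positivity), sub_eq_add_neg,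
      rpow_one_add' hs.le (by linarith)]
    exact mul_le_mul_of_nonneg_right (one_sub_exp_neg_le_self s) (by positivity)
  have hF_top : Tendsto F atTop (𝓝 0) := by
    refine squeeze_zero_norm' ?_ (tendsto_rpow_neg_atTop hα0)
    filter_upwards [eventually_gt_atTop 0] with s hs
    rw [norm_of_nonneg (by have := one_sub_exp_neg_nonneg hs.le; positivity)]
    exact mul_le_of_le_one_left (by positivity) (one_sub_exp_neg_le_one s)
  have hcont : ContinuousWithinAt F (Ici 0) 0 := by
    rw [← continuousWithinAt_Ioi_iff_Ici, ContinuousWithinAt, hF0]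
    exact hF_right
  have hΓ := GammaIntegral_convergent (by linarith : 0 < 1 - α)
  have hG := integrableOn_one_sub_exp_neg_mul_rpow hα0 hα1
  have hftc := integral_Ioi_of_hasDerivAt_of_tendsto hcont
    (fun s hs => hasDerivAt_one_sub_exp_neg_mul_rpow hs) (hΓ.sub hG) hF_top
  rw [integral_sub hΓ hG, hF0, ← Gamma_eq_integral (by linarith)] at hftc
  linarith

end

lemma one_sub_exp_neg_rpow_mul_rpow_eq {μ ν β x : ℝ} (hμ : 0 < μ) (hν : 0 < ν) (hx : 0 < x) :
    (1 - exp (-(μ * x) ^ ν)) * (β * x ^ (-β - 1)) =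
      μ ^ β * μ * ((ν * (μ * x) ^ (ν - 1)) *
        ((1 - exp (-(μ * x) ^ ν)) * (β / ν * ((μ * x) ^ ν) ^ (-(β / ν) - 1)))) := by
  have hy : 0 < μ * x := mul_pos hμ hx
  have e1 : ((μ * x) ^ ν) ^ (-(β / ν) - 1) = (μ * x) ^ (-β - ν) := by
    rw [← rpow_mul hy.le]; congr 1; field_simp
  have e2 : (μ * x) ^ (ν - 1) * (μ * x) ^ (-β - ν) = μ ^ (-β - 1) * x ^ (-β - 1) := by
    rw [← rpow_add hy, mul_rpow hμ.le hx.le]; ring_nf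
  have e3 : μ ^ β * μ * μ ^ (-β - 1) = 1 := by
    rw [mul_right_comm, ← rpow_add hμ, ← rpow_add_one hμ.ne',
      show β + (-β - 1) + 1 = 0 by ring, rpow_zero]
  calc (1 - exp (-(μ * x) ^ ν)) * (β * x ^ (-β - 1))
      = (1 - exp (-(μ * x) ^ ν)) * (β * (μ ^ β * μ * μ ^ (-β - 1) * x ^ (-β - 1))) := by
        rw [e3, one_mul]
    _ = _ := by
        rw [e1, mul_assoc (μ ^ β * μ), ← e2]
        field_simp

section

variable {μ ν β : ℝ}

lemma integrableOn_one_sub_exp_neg_rpow_mul_rpow (hμ : 0 < μ) (hβ : 0 < β) (hβν : β < ν) :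
    IntegrableOn (fun x : ℝ => (1 - exp (-(μ * x) ^ ν)) * (β * x ^ (-β - 1))) (Ioi 0) := by
  have hν : 0 < ν := hβ.trans hβν
  have hG := integrableOn_one_sub_exp_neg_mul_rpow (div_pos hβ hν) ((div_lt_one hν).mpr hβν)
  rw [← integrableOn_Ioi_comp_rpow_iff _ hν.ne', ← mul_zero μ,
    ← integrableOn_Ioi_comp_mul_left_iff _ 0 hμ] at hG
  refine IntegrableOn.congr_fun (hG.const_mul (μ ^ β * μ)) (fun x (hx : 0 < x) => ?_)
    measurableSet_Ioi
  simp only [abs_of_pos hν, smul_eq_mul, one_sub_exp_neg_rpow_mul_rpow_eq hμ hν hx]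

theorem integral_one_sub_exp_neg_rpow_mul_rpow (hμ : 0 < μ) (hβ : 0 < β) (hβν : β < ν) :
    ∫ x in Ioi 0, (1 - exp (-(μ * x) ^ ν)) * (β * x ^ (-β - 1)) =
      μ ^ β * Gamma (1 - β / ν) := by
  have hν : 0 < ν := hβ.trans hβν
  rw [setIntegral_congr_fun measurableSet_Ioi
      (fun x (hx : 0 < x) => one_sub_exp_neg_rpow_mul_rpow_eq (β := β) hμ hν hx),
    integral_const_mul,
    integral_comp_mul_left_Ioi (fun y => (ν * y ^ (ν - 1)) *
      ((1 - exp (-y ^ ν)) * (β / ν * (y ^ ν) ^ (-(β / ν) - 1)))) 0 hμ, mul_zero]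
  have hsubst := integral_comp_rpow_Ioi_of_pos hν
    (g := fun s => (1 - exp (-s)) * (β / ν * s ^ (-(β / ν) - 1)))
  simp only [smul_eq_mul] at hsubst ⊢
  rw [hsubst, integral_one_sub_exp_neg_mul_rpow (div_pos hβ hν) ((div_lt_one hν).mpr hβν)]
  field_simp

end

lemma tendsto_rpow_neg_mul_one_sub_exp_neg_rpow {μ ν : ℝ} (hμ : 0 < μ) (hν : 0 < ν) :
    Tendsto (fun δ : ℝ => δ ^ (-ν) * (1 - exp (-(μ * δ) ^ ν))) (𝓝[>] 0) (𝓝 (μ ^ ν)) := by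
  have hu : Tendsto (fun δ : ℝ => (μ * δ) ^ ν) (𝓝[>] 0) (𝓝[>] 0) :=
    (tendsto_rpow_nhdsGT_zero hν).comp (tendsto_iff_comap.mpr (comap_mulLeft_nhdsGT_zero hμ).ge)
  have := (tendsto_inv_mul_one_sub_exp_neg.comp hu).const_mul (μ ^ ν)
  rw [mul_one] at this
  refine this.congr' ?_
  filter_upwards [self_mem_nhdsWithin] with δ (hδ : 0 < δ)
  simp only [Function.comp_apply, mul_rpow hμ.le hδ.le, rpow_neg hδ.le, mul_inv, ← mul_assoc,
    mul_inv_cancel₀ (rpow_pos_of_pos hμ ν).ne', one_mul]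

lemma rpow_neg_mul_integral_pareto {β δ : ℝ} (hδ : 0 < δ) (f : ℝ → ℝ) :
    δ ^ (-β) * ∫ x in Ioi δ, f x * (β * δ ^ β * x ^ (-β - 1)) =
      ∫ x in Ioi δ, f x * (β * x ^ (-β - 1)) := by
  simp_rw [mul_comm β (δ ^ β), mul_assoc (δ ^ β), mul_left_comm (f _) (δ ^ β)]
  rw [integral_const_mul, ← mul_assoc, ← rpow_add hδ, neg_add_cancel, rpow_zero, one_mul]

theorem compound_poisson_limit_pareto_general
    (lam ν β t μ : ℝ) (hβ : 0 < β) (hβν : β < ν) (hμ : 0 < μ) :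
    Tendsto (fun δ : ℝ => Real.exp (-lam * t * δ ^ (-β) *
        ∫ x in Ioi δ, (1 - Real.exp (-((μ * x) ^ ν))) * (β * δ ^ β * x ^ (-β - 1))))
      (nhdsWithin 0 (Ioi 0))
      (nhds (Real.exp (-lam * t * μ ^ β * Real.Gamma (1 - β / ν)))) ∧
    Tendsto (fun δ : ℝ => Real.exp (-lam * t * δ ^ (-ν) * (1 - Real.exp (-((μ * δ) ^ ν)))))
      (nhdsWithin 0 (Ioi 0))
      (nhds (Real.exp (-lam * t * μ ^ ν))) := by
  have hν : 0 < ν := hβ.trans hβν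
  simp only [mul_assoc (-lam * t)]
  constructor
  · have htail := (integrableOn_one_sub_exp_neg_rpow_mul_rpow hμ hβ hβν
      ).continuousWithinAt_Ici_primitive_Ioi.mono Ioi_subset_Ici_self
    rw [ContinuousWithinAt, integral_one_sub_exp_neg_rpow_mul_rpow hμ hβ hβν] at htail
    refine ((continuous_exp.tendsto _).comp (htail.const_mul (-lam * t))).congr' ?_
    filter_upwards [self_mem_nhdsWithin] with δ (hδ : 0 < δ)
    rw [Function.comp_apply, rpow_neg_mul_integral_pareto hδ]
  · exact (continuous_exp.tendsto _).comp
      ((tendsto_rpow_neg_mul_one_sub_exp_neg_rpow hμ hν).const_mul (-lam * t))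

theorem compound_poisson_limit_pareto
    (lam ν β t μ : ℝ) (hlam : 0 < lam) (hν : 0 < ν) (hβ : 0 < β) (hβν : β < ν)
    (ht : 0 < t) (hμ : 0 < μ) :
    Tendsto (fun δ : ℝ => Real.exp (-lam * t * δ ^ (-β) *
        ∫ x in Ioi δ, (1 - Real.exp (-((μ * x) ^ ν))) * (β * δ ^ β * x ^ (-β - 1))))
      (nhdsWithin 0 (Ioi 0))
      (nhds (Real.exp (-lam * t * μ ^ β * Real.Gamma (1 - β / ν)))) ∧
    Tendsto (fun δ : ℝ => Real.exp (-lam * t * δ ^ (-ν) * (1 - Real.exp (-((μ * δ) ^ ν)))))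
      (nhdsWithin 0 (Ioi 0))
      (nhds (Real.exp (-lam * t * μ ^ ν))) :=
  compound_poisson_limit_pareto_general lam ν β t μ hβ hβν hμ
end

section
/- Let α > 0, let ν̲ = (ν₁,…,ν_N) with ν_i > 0 and λ_i > 0, let l_{ν̲}(s,x) have t-Laplace transform Σ_i λ_i μ^{ν_i-1} e^{-x Σ_i λ_i μ^{ν_i}}, and let l_α(t,s) have t-Laplace transform μ^{α-1} e^{-μ^α s}. Then the t-Laplace transform of the composed kernel (t,x) ↦ ∫_0^∞ l_{ν̲}(s,x) l_α(t,s) ds equals μ^{α-1} Σ_{i=1}^N λ_i μ^{α(ν_i - 1)} e^{-x Σ_{i=1}^N λ_i μ^{αν_i}}, i.e. it coincides with the t-Laplace transform of l_{αν̲}. Hence L_{ν̲}(L_α(t)) is equal in distribution to L_{αν̲}(t). -/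
/-!
Substituting the Laplace transform of `l_α(·, s)` under the integral (Fubini) turns the
`t`-Laplace transform of the composed kernel at `μ` into `μ^(α-1)` times the `s`-Laplace
transform of `l_ν̲(·, x)` at `μ^α`; the claimed formula is then `(μ^α)^ν = μ^(αν)`.
-/

open MeasureTheory Set

theorem integral_mul_integral_mul_comm {X Y : Type*} [MeasurableSpace X] [MeasurableSpace Y]
    {μ : Measure X} {ν : Measure Y} [SFinite μ] [SFinite ν]
    {w : X → ℝ} {f : Y → ℝ} {g : X → Y → ℝ}
    (h : Integrable (fun p : X × Y => w p.1 * f p.2 * g p.1 p.2) (μ.prod ν)) :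
    ∫ x, w x * ∫ y, f y * g x y ∂ν ∂μ = ∫ y, f y * ∫ x, w x * g x y ∂μ ∂ν := by
  calc ∫ x, w x * ∫ y, f y * g x y ∂ν ∂μ = ∫ x, ∫ y, w x * f y * g x y ∂ν ∂μ := by
        simp_rw [← integral_const_mul, mul_assoc]
    _ = ∫ y, ∫ x, w x * f y * g x y ∂μ ∂ν := integral_integral_swap h
    _ = ∫ y, f y * ∫ x, w x * g x y ∂μ ∂ν := by
        congr 1 with y
        rw [← integral_const_mul]
        congr 1 with x
        ring

theorem setIntegral_exp_mul_setIntegral_subordinate {f : ℝ → ℝ} {g : ℝ → ℝ → ℝ} {μ a c : ℝ}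
    (hint : IntegrableOn (fun p : ℝ × ℝ => Real.exp (-μ * p.1) * f p.2 * g p.1 p.2)
      (Ioi 0 ×ˢ Ioi 0))
    (hg : ∀ s, 0 < s → ∫ t in Ioi (0:ℝ), Real.exp (-μ * t) * g t s = c * Real.exp (-a * s)) :
    ∫ t in Ioi (0:ℝ), Real.exp (-μ * t) * ∫ s in Ioi (0:ℝ), f s * g t s =
      c * ∫ s in Ioi (0:ℝ), Real.exp (-a * s) * f s := by
  rw [IntegrableOn, Measure.volume_eq_prod, ← Measure.prod_restrict] at hint
  rw [integral_mul_integral_mul_comm hint, ← integral_const_mul]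
  refine setIntegral_congr_fun measurableSet_Ioi fun s hs => ?_
  rw [hg s hs]
  ring

theorem rpow_sub_one_mul_sum_mul_rpow {ι : Type*} (S : Finset ι) {μ : ℝ} (hμ : 0 < μ)
    (α : ℝ) (ν lam : ι → ℝ) :
    μ ^ (α - 1) * ∑ i ∈ S, lam i * μ ^ (α * (ν i - 1)) = ∑ i ∈ S, lam i * μ ^ (α * ν i - 1) := by
  rw [Finset.mul_sum]
  refine Finset.sum_congr rfl fun i _ => ?_
  rw [mul_left_comm, ← Real.rpow_add hμ]
  ring_nf

theorem pseudo_inverse_composition_identity_general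
    (N : ℕ) (α : ℝ)
    (ν lam : Fin N → ℝ)
    (lν lα : ℝ → ℝ → ℝ)
    (hlν : ∀ μ : ℝ, 0 < μ → ∀ x : ℝ, 0 ≤ x →
      ∫ t in Ioi (0:ℝ), Real.exp (-μ * t) * lν t x =
        (∑ i, lam i * μ ^ (ν i - 1)) * Real.exp (-x * ∑ i, lam i * μ ^ ν i))
    (hlα : ∀ μ : ℝ, 0 < μ → ∀ s : ℝ, 0 ≤ s →
      ∫ t in Ioi (0:ℝ), Real.exp (-μ * t) * lα t s = μ ^ (α - 1) * Real.exp (-(μ ^ α) * s))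
    (hFub : ∀ μ : ℝ, 0 < μ → ∀ x : ℝ, 0 ≤ x →
      IntegrableOn (fun p : ℝ × ℝ => Real.exp (-μ * p.1) * lν p.2 x * lα p.1 p.2)
        ((Ioi (0:ℝ)) ×ˢ (Ioi (0:ℝ)))) :
    ∀ μ : ℝ, 0 < μ → ∀ x : ℝ, 0 ≤ x →
      (∫ t in Ioi (0:ℝ), Real.exp (-μ * t) * ∫ s in Ioi (0:ℝ), lν s x * lα t s =
        μ ^ (α - 1) * (∑ i, lam i * μ ^ (α * (ν i - 1))) *
          Real.exp (-x * ∑ i, lam i * μ ^ (α * ν i))) ∧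
      -- this coincides with the t-Laplace transform of `l_{αν̲}`
      (μ ^ (α - 1) * (∑ i, lam i * μ ^ (α * (ν i - 1))) *
          Real.exp (-x * ∑ i, lam i * μ ^ (α * ν i)) =
        (∑ i, lam i * μ ^ (α * ν i - 1)) *
          Real.exp (-x * ∑ i, lam i * μ ^ (α * ν i))) := by
  intro μ hμ x hx
  refine ⟨?_, by rw [rpow_sub_one_mul_sum_mul_rpow _ hμ]⟩
  rw [setIntegral_exp_mul_setIntegral_subordinate (hFub μ hμ x hx) fun s hs => hlα μ hμ s hs.le,
    hlν _ (Real.rpow_pos_of_pos hμ α) x hx]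
  simp only [← Real.rpow_mul hμ.le, mul_assoc]

theorem pseudo_inverse_composition_identity
    (N : ℕ) (hN : 0 < N) (α : ℝ) (hα : 0 < α)
    (ν lam : Fin N → ℝ) (hν : ∀ i, 0 < ν i) (hlam : ∀ i, 0 < lam i)
    (lν lα : ℝ → ℝ → ℝ)
    (hmeasν : Measurable (Function.uncurry lν)) (hmeasα : Measurable (Function.uncurry lα))
    (hlν : ∀ μ : ℝ, 0 < μ → ∀ x : ℝ, 0 ≤ x →
      ∫ t in Ioi (0:ℝ), Real.exp (-μ * t) * lν t x =
        (∑ i, lam i * μ ^ (ν i - 1)) * Real.exp (-x * ∑ i, lam i * μ ^ ν i))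
    (hlα : ∀ μ : ℝ, 0 < μ → ∀ s : ℝ, 0 ≤ s →
      ∫ t in Ioi (0:ℝ), Real.exp (-μ * t) * lα t s = μ ^ (α - 1) * Real.exp (-(μ ^ α) * s))
    (hFub : ∀ μ : ℝ, 0 < μ → ∀ x : ℝ, 0 ≤ x →
      IntegrableOn (fun p : ℝ × ℝ => Real.exp (-μ * p.1) * lν p.2 x * lα p.1 p.2)
        ((Ioi (0:ℝ)) ×ˢ (Ioi (0:ℝ)))) :
    ∀ μ : ℝ, 0 < μ → ∀ x : ℝ, 0 ≤ x →
      (∫ t in Ioi (0:ℝ), Real.exp (-μ * t) * ∫ s in Ioi (0:ℝ), lν s x * lα t s =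
        μ ^ (α - 1) * (∑ i, lam i * μ ^ (α * (ν i - 1))) *
          Real.exp (-x * ∑ i, lam i * μ ^ (α * ν i))) ∧
      -- this coincides with the t-Laplace transform of `l_{αν̲}`
      (μ ^ (α - 1) * (∑ i, lam i * μ ^ (α * (ν i - 1))) *
          Real.exp (-x * ∑ i, lam i * μ ^ (α * ν i)) =
        (∑ i, lam i * μ ^ (α * ν i - 1)) *
          Real.exp (-x * ∑ i, lam i * μ ^ (α * ν i))) :=
  pseudo_inverse_composition_identity_general N α ν lam lν lα hlν hlα hFub
end

section
/- Let ν > 0, let F ∈ ℂ with Re(F) < 0 and let f_j : ℝ^d → ℝ be Fourier-transformable. Consider (i) the function whose Fourier–Laplace transform is μ^{ν-j-1} Ff_j(γ)/(μ^ν - F(γ)) (the solution of the space-time fractional problem with only the j-th initial condition f_j nonzero), and (ii) the stochastic composition of u₁ with Fourier transform Ff_j(γ) e^{tF(γ)} (solution of the first-order space problem with initial datum f_j) and u₂ with t-Laplace transform μ^{ν-j-1} e^{-μ^ν x} (solution of the time problem with boundary datum h, Lh(μ) = μ^{ν-j-1}, and zero initial conditions). Then the Fourier–Laplace transforms of (i)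 and (ii) coincide for all μ > 0, γ ∈ ℝ^d. -/
/-!
Integrating the Laplace transform in `t` under the `s`-integral (Fubini) replaces `u₂(·, s)` by
its Laplace transform `μ^{ν-j-1} e^{-μ^ν s}`. What remains is
`μ^{ν-j-1} Ff_j(γ) ∫₀^∞ e^{s F(γ)} e^{-μ^ν s} ds = μ^{ν-j-1} Ff_j(γ) / (μ^ν - F(γ))`,
an exponential integral that converges because `Re F(γ) < 0 < μ^ν`.
-/

open MeasureTheory Set

theorem setIntegral_mul_setIntegral_mul_swap {α β 𝕜 : Type*} [RCLike 𝕜]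
    [MeasurableSpace α] [MeasurableSpace β] {μ : Measure α} {ν : Measure β}
    [SFinite μ] [SFinite ν] {s : Set α} {t : Set β} {k : α → 𝕜} {v : β → 𝕜} {u : α → β → 𝕜}
    (h : IntegrableOn (fun p : α × β => k p.1 * v p.2 * u p.1 p.2) (s ×ˢ t) (μ.prod ν)) :
    ∫ x in s, k x * ∫ y in t, v y * u x y ∂ν ∂μ =
      ∫ y in t, v y * ∫ x in s, k x * u x y ∂μ ∂ν := by
  rw [IntegrableOn, ← Measure.prod_restrict] at h
  calc ∫ x in s, k x * ∫ y in t, v y * u x y ∂ν ∂μ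
      = ∫ x in s, ∫ y in t, k x * v y * u x y ∂ν ∂μ := by
        simp_rw [← integral_const_mul, mul_assoc]
    _ = ∫ y in t, ∫ x in s, k x * v y * u x y ∂μ ∂ν := integral_integral_swap h
    _ = ∫ y in t, v y * ∫ x in s, k x * u x y ∂μ ∂ν := by
        simp_rw [← integral_const_mul, ← mul_assoc, mul_comm (v _)]

theorem setIntegral_cexp_neg_mul_ofReal {μ : ℝ} {s : Set ℝ} (f : ℝ → ℝ) :
    ∫ t in s, Complex.exp (-(μ : ℂ) * t) * (f t : ℂ) =
      ((∫ t in s, Real.exp (-μ * t) * f t : ℝ) : ℂ) := by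
  rw [← integral_complex_ofReal]
  push_cast
  rfl

theorem integral_cexp_mul_mul_exp_neg_Ioi {F : ℂ} {r : ℝ} (hF : F.re < r) :
    ∫ s in Ioi (0 : ℝ), Complex.exp (s * F) * (Real.exp (-r * s) : ℂ) = 1 / (r - F) := by
  have hre : (F - r).re < 0 := by simpa using hF
  calc ∫ s in Ioi (0 : ℝ), Complex.exp (s * F) * (Real.exp (-r * s) : ℂ)
      = ∫ s in Ioi (0 : ℝ), Complex.exp ((F - r) * s) := by
        congr 1 with s
        push_cast
        rw [← Complex.exp_add]
        ring_nf
    _ = 1 / (r - F) := by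
        rw [integral_exp_mul_complex_Ioi hre, Complex.ofReal_zero, mul_zero, Complex.exp_zero,
          neg_div, ← div_neg, neg_sub]

theorem stochastic_composition_case_a_general
    (d : ℕ) (ν : ℝ) (j : ℕ)
    (F : (Fin d → ℝ) → ℂ) (hF : ∀ γ, (F γ).re < 0)
    (fj : (Fin d → ℝ) → ℂ)
    -- `Fu₁ s γ` is the Fourier transform of the solution of the space problem
    (Fu₁ : ℝ → (Fin d → ℝ) → ℂ)
    (hu₁ : ∀ s : ℝ, 0 ≤ s → ∀ γ, Fu₁ s γ = fj γ * Complex.exp (s * F γ))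
    -- `u₂` is the solution of the time problem with `Lh(μ) = μ^{ν-j-1}`
    (u₂ : ℝ → ℝ → ℝ)
    (hu₂ : ∀ μ : ℝ, 0 < μ → ∀ s : ℝ, 0 ≤ s →
      ∫ t in Ioi (0:ℝ), Real.exp (-μ * t) * u₂ t s =
        μ ^ (ν - j - 1) * Real.exp (-(μ ^ ν) * s))
    (hFub : ∀ μ : ℝ, 0 < μ → ∀ γ,
      IntegrableOn (fun p : ℝ × ℝ =>
          Complex.exp (-(μ : ℂ) * p.1) * Fu₁ p.2 γ * (u₂ p.1 p.2 : ℂ))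
        ((Ioi (0:ℝ)) ×ˢ (Ioi (0:ℝ)))) :
    ∀ μ : ℝ, 0 < μ → ∀ γ,
      ∫ t in Ioi (0:ℝ), Complex.exp (-(μ : ℂ) * t) *
          ∫ s in Ioi (0:ℝ), Fu₁ s γ * (u₂ t s : ℂ) =
        ((μ ^ (ν - j - 1) : ℝ) : ℂ) * fj γ / (((μ ^ ν : ℝ) : ℂ) - F γ) := by
  intro μ hμ γ
  have hre : (F γ).re < μ ^ ν := (hF γ).trans (Real.rpow_pos_of_pos hμ ν)
  rw [setIntegral_mul_setIntegral_mul_swap (k := fun t : ℝ => Complex.exp (-(μ : ℂ) * t))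
    (v := fun s => Fu₁ s γ) (u := fun t s => (u₂ t s : ℂ)) (hFub μ hμ γ)]
  calc ∫ s in Ioi (0:ℝ), Fu₁ s γ * ∫ t in Ioi (0:ℝ), Complex.exp (-(μ : ℂ) * t) * (u₂ t s : ℂ)
      = ∫ s in Ioi (0:ℝ), ((μ ^ (ν - j - 1) : ℝ) : ℂ) * fj γ *
          (Complex.exp (s * F γ) * (Real.exp (-(μ ^ ν) * s) : ℂ)) :=
        setIntegral_congr_fun measurableSet_Ioi fun s hs => by
          rw [setIntegral_cexp_neg_mul_ofReal, hu₂ μ hμ s hs.le, hu₁ s hs.le]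
          push_cast
          ring
    _ = ((μ ^ (ν - j - 1) : ℝ) : ℂ) * fj γ / (((μ ^ ν : ℝ) : ℂ) - F γ) := by
        rw [integral_const_mul, integral_cexp_mul_mul_exp_neg_Ioi hre, mul_one_div]

theorem stochastic_composition_case_a
    (d : ℕ) (ν : ℝ) (hν : 0 < ν) (j : ℕ) (hj : j < ⌈ν⌉₊)
    (F : (Fin d → ℝ) → ℂ) (hF : ∀ γ, (F γ).re < 0)
    (fj : (Fin d → ℝ) → ℂ)
    -- `Fu₁ s γ` is the Fourier transform of the solution of the space problem
    (Fu₁ : ℝ → (Fin d → ℝ) → ℂ)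
    (hu₁ : ∀ s : ℝ, 0 ≤ s → ∀ γ, Fu₁ s γ = fj γ * Complex.exp (s * F γ))
    -- `u₂` is the solution of the time problem with `Lh(μ) = μ^{ν-j-1}`
    (u₂ : ℝ → ℝ → ℝ) (hmeas : Measurable (Function.uncurry u₂))
    (hu₂ : ∀ μ : ℝ, 0 < μ → ∀ s : ℝ, 0 ≤ s →
      ∫ t in Ioi (0:ℝ), Real.exp (-μ * t) * u₂ t s =
        μ ^ (ν - j - 1) * Real.exp (-(μ ^ ν) * s))
    (hFub : ∀ μ : ℝ, 0 < μ → ∀ γ,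
      IntegrableOn (fun p : ℝ × ℝ =>
          Complex.exp (-(μ : ℂ) * p.1) * Fu₁ p.2 γ * (u₂ p.1 p.2 : ℂ))
        ((Ioi (0:ℝ)) ×ˢ (Ioi (0:ℝ)))) :
    ∀ μ : ℝ, 0 < μ → ∀ γ,
      ∫ t in Ioi (0:ℝ), Complex.exp (-(μ : ℂ) * t) *
          ∫ s in Ioi (0:ℝ), Fu₁ s γ * (u₂ t s : ℂ) =
        ((μ ^ (ν - j - 1) : ℝ) : ℂ) * fj γ / (((μ ^ ν : ℝ) : ℂ) - F γ) :=
  stochastic_composition_case_a_general d ν j F hF fj Fu₁ hu₁ u₂ hu₂ hFub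
end
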